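/- arXiv:1102.2374 — 2 statements merged into one kernel-verified Lean document; each statement's English description precedes it below -/
import Mathlib

section
/- Let v : [0,∞) → ℝ be C¹ with v'(0)=0, C² on (0,∞), solving v'' + (1/a)v' = v³ - v on (0,∞) (defocusing, μ = -1). If |v(0)| < 1 then |v(a)| ≤ |v(0)| < 1 for all a > 0. -/
open Real Set

/-!
The radial energy `½ v'(a)² + F(v(a))`, with `F(x) = x²/2 - x⁴/4`, has derivative
`-v'(a)²/a ≤ 0`, so it never exceeds its initial value `F(v(0))`. Since `F` is strictly
increasing in `x²` on `[0, 1]` and `F(±1) = 1/4 > F(v(0))`, the intermediate value theorem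
keeps `v²` below `1`, and then `F(v(a)) ≤ F(v(0))` forces `v(a)² ≤ v(0)²`.
-/

-- `derivWithin` on `Ici 0` makes the energy at `a = 0` use the one-sided derivative `v'(0)`.
noncomputable def radialEnergy (G v : ℝ → ℝ) (a : ℝ) : ℝ :=
  derivWithin v (Ici 0) a ^ 2 / 2 + G (v a)

section RadialEnergy

variable {G g v : ℝ → ℝ}

theorem hasDerivAt_radialEnergy (hG : ∀ x, HasDerivAt G (g x) x)
    (hv2 : ContDiffOn ℝ 2 v (Ioi 0))
    (hode : ∀ a > (0:ℝ), deriv (deriv v) a + deriv v a / a = -g (v a))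
    {a : ℝ} (ha : 0 < a) :
    HasDerivAt (radialEnergy G v) (-deriv v a ^ 2 / a) a := by
  have hnhds : Ioi (0:ℝ) ∈ nhds a := isOpen_Ioi.mem_nhds ha
  have hv : HasDerivAt v (deriv v a) a :=
    ((hv2.differentiableOn (by norm_num)).differentiableAt hnhds).hasDerivAt
  have hv' : HasDerivAt (deriv v) (deriv (deriv v) a) a :=
    (((hv2.deriv_of_isOpen isOpen_Ioi (by norm_num) : ContDiffOn ℝ 1 _ _).differentiableOn
      one_ne_zero).differentiableAt hnhds).hasDerivAt
  have hw : derivWithin v (Ici 0) =ᶠ[nhds a] deriv v := by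
    filter_upwards [hnhds] with t ht using derivWithin_of_mem_nhds (Ici_mem_nhds ht)
  have hE := ((hv'.congr_of_eventuallyEq hw).pow 2).div_const 2 |>.add ((hG (v a)).comp a hv)
  have hg : g (v a) = -(deriv (deriv v) a + deriv v a / a) := by linarith [hode a ha]
  refine hE.congr_deriv ?_
  rw [hw.eq_of_nhds, hg]
  field_simp
  ring

theorem antitoneOn_radialEnergy (hG : ∀ x, HasDerivAt G (g x) x)
    (hv1 : ContDiffOn ℝ 1 v (Ici 0)) (hv2 : ContDiffOn ℝ 2 v (Ioi 0))
    (hode : ∀ a > (0:ℝ), deriv (deriv v) a + deriv v a / a = -g (v a)) :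
    AntitoneOn (radialEnergy G v) (Ici 0) := by
  have hcont : ContinuousOn (radialEnergy G v) (Ici 0) := by
    have hw := (hv1.derivWithin (m := 0) (uniqueDiffOn_Ici 0) (by norm_num)).continuousOn
    exact ((hw.pow 2).div_const 2).add
      ((continuous_iff_continuousAt.2 fun x => (hG x).continuousAt).comp_continuousOn
        hv1.continuousOn)
  refine antitoneOn_of_deriv_nonpos (convex_Ici 0) hcont ?_ ?_ <;> rw [interior_Ici]
  · exact fun a ha =>
      (hasDerivAt_radialEnergy hG hv2 hode ha).differentiableAt.differentiableWithinAt
  · intro a ha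
    rw [(hasDerivAt_radialEnergy hG hv2 hode ha).deriv]
    exact div_nonpos_of_nonpos_of_nonneg (neg_nonpos.2 (sq_nonneg _)) (le_of_lt ha)

theorem potential_le_of_derivWithin_zero_eq_zero (hG : ∀ x, HasDerivAt G (g x) x)
    (hv1 : ContDiffOn ℝ 1 v (Ici 0)) (hv2 : ContDiffOn ℝ 2 v (Ioi 0))
    (hode : ∀ a > (0:ℝ), deriv (deriv v) a + deriv v a / a = -g (v a))
    (hv'0 : derivWithin v (Ici 0) 0 = 0) {a : ℝ} (ha : 0 ≤ a) :
    G (v a) ≤ G (v 0) := by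
  have hle := antitoneOn_radialEnergy hG hv1 hv2 hode self_mem_Ici (mem_Ici.2 ha) ha
  simp only [radialEnergy, hv'0] at hle
  nlinarith [sq_nonneg (derivWithin v (Ici 0) a)]

end RadialEnergy

noncomputable def defocusingPotential (x : ℝ) : ℝ := x ^ 2 / 2 - x ^ 4 / 4

theorem hasDerivAt_defocusingPotential (x : ℝ) :
    HasDerivAt defocusingPotential (x - x ^ 3) x := by
  exact (((hasDerivAt_pow 2 x).div_const 2).sub ((hasDerivAt_pow 4 x).div_const 4)).congr_deriv
    (by norm_num)

theorem defocusingPotential_lt_of_sq_lt {x y : ℝ} (hxy : x ^ 2 < y ^ 2) (hy : y ^ 2 ≤ 1) :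
    defocusingPotential x < defocusingPotential y := by
  unfold defocusingPotential
  nlinarith [mul_pos (sub_pos.2 hxy) (show 0 < 2 - x ^ 2 - y ^ 2 by linarith)]

theorem sq_lt_one_of_defocusingPotential_le {v : ℝ → ℝ} (hv : ContinuousOn v (Ici 0))
    (hpot : ∀ a ≥ (0:ℝ), defocusingPotential (v a) ≤ defocusingPotential (v 0))
    (h0 : v 0 ^ 2 < 1) {a : ℝ} (ha : 0 ≤ a) : v a ^ 2 < 1 := by
  by_contra! h
  obtain ⟨b, hb, hb1⟩ := intermediate_value_Icc ha ((hv.mono Icc_subset_Ici_self).pow 2)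
    (show (1:ℝ) ∈ Icc (v 0 ^ 2) (v a ^ 2) from ⟨h0.le, h⟩)
  have hlt := defocusingPotential_lt_of_sq_lt (h0.trans_eq hb1.symm) hb1.le
  exact (hpot b hb.1).not_gt hlt

/-- Defocusing equation with `μ = -1`: `v'' + v'/a = v³ - v`. If `|v(0)| < 1` then
`|v(a)| ≤ |v(0)| < 1` for all `a > 0`. -/
theorem stmt8 (v : ℝ → ℝ)
    (hv1 : ContDiffOn ℝ 1 v (Set.Ici 0))
    (hv2 : ContDiffOn ℝ 2 v (Set.Ioi 0))
    (hode : ∀ a > (0:ℝ), deriv (deriv v) a + deriv v a / a = (v a) ^ 3 - v a)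
    (hv'0 : derivWithin v (Set.Ici 0) 0 = 0)
    (h0 : |v 0| < 1) :
    ∀ a > (0:ℝ), |v a| ≤ |v 0| := by
  intro a ha
  have hode' : ∀ a > (0:ℝ), deriv (deriv v) a + deriv v a / a = -(v a - v a ^ 3) :=
    fun a ha => (hode a ha).trans (by ring)
  have hpot : ∀ a ≥ (0:ℝ), defocusingPotential (v a) ≤ defocusingPotential (v 0) :=
    fun a ha => potential_le_of_derivWithin_zero_eq_zero hasDerivAt_defocusingPotential
      hv1 hv2 hode' hv'0 ha
  have hbound : v a ^ 2 < 1 := sq_lt_one_of_defocusingPotential_le hv1.continuousOn hpot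
    ((sq_lt_one_iff_abs_lt_one _).2 h0) ha.le
  rw [← sq_le_sq]
  by_contra! hlt
  exact (hpot a ha.le).not_gt (defocusingPotential_lt_of_sq_lt hlt hbound.le)
end

section
/- Consider the self-similar defocusing ODE w'' + (1/16 + 1/(4s²) - μ/(2s))w - w³/(2s²) = 0 on [s₀,∞) with s₀ = 16(|μ|+1), and E(s) = ½(w')² + (1/32 + 1/(8s²) - μ/(4s))w² - w⁴/(8s²). If |w(s₀)| ≤ 1 and |w(s₀)|, |w'(s₀)| are sufficiently small, then |w(s)| ≤ 1 for all s ≥ s₀ and w, w' remain bounded: as long as |w| ≤ 1, E(s) ≥ ½(w')² + w²/64 and E'(s) ≤ (16(|μ|+1)/s²)E(s), and a bootstrap closes the bound. -/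
open Real Set Filter

/-!
While `|w| ≤ 1` the energy dominates `(w')²/2 + w²/64` and grows at rate at most
`s₀/s² · E`. As `∫_{s₀}^∞ s₀/s² ds = 1`, the integrating factor `exp (s₀/s)` gives
`E(s) ≤ e · E(s₀)`, which for data of size `1/32` forces `|w| < 1` and `|w'| ≤ 1`;
a continuity argument then removes the a priori assumption `|w| ≤ 1`.
-/

lemma mul_exp_div_le_of_hasDerivAt_le {E E' : ℝ → ℝ} {k a b : ℝ} (ha : 0 < a)
    (hab : a ≤ b) (hE : ContinuousOn E (Icc a b)) (hE' : ∀ x ∈ Ioo a b, HasDerivAt E (E' x) x)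
    (hle : ∀ x ∈ Ioo a b, E' x ≤ k / x ^ 2 * E x) :
    E b * exp (k / b) ≤ E a * exp (k / a) := by
  have hpos : ∀ x ∈ Icc a b, x ≠ 0 := fun x hx => (ha.trans_le hx.1).ne'
  have hanti : AntitoneOn (fun x => E x * exp (k / x)) (Icc a b) := by
    refine antitoneOn_of_hasDerivWithinAt_nonpos (convex_Icc a b)
      (hE.mul (continuousOn_const.div continuousOn_id hpos).rexp) (fun x hx => ?_) (fun x hx => ?_)
      (f' := fun x => E' x * exp (k / x) + E x * (exp (k / x) * (-k / x ^ 2)))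
    · rw [interior_Icc] at hx ⊢
      have hk : HasDerivAt (fun y => k / y) (-k / x ^ 2) x := by
        simpa [div_eq_mul_inv, neg_div] using
          (hasDerivAt_inv (hpos x (Ioo_subset_Icc_self hx))).const_mul k
      exact ((hE' x hx).mul hk.exp).hasDerivWithinAt
    · rw [interior_Icc] at hx
      have : E' x * exp (k / x) ≤ k / x ^ 2 * E x * exp (k / x) :=
        mul_le_mul_of_nonneg_right (hle x hx) (exp_pos _).le
      linarith [show E x * (exp (k / x) * (-k / x ^ 2)) = -(k / x ^ 2 * E x * exp (k / x)) by ring]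
  exact hanti ⟨le_rfl, hab⟩ ⟨hab, le_rfl⟩ hab

lemma abs_lt_of_bootstrap {f : ℝ → ℝ} {a M : ℝ} (hf : ContinuousOn f (Ici a))
    (ha : |f a| ≤ M) (hstep : ∀ t ≥ a, (∀ s ∈ Icc a t, |f s| ≤ M) → |f t| < M)
    (t : ℝ) (ht : a ≤ t) :
    |f t| < M := by
  by_contra! hbad
  let S := {s ∈ Icc a t | M ≤ |f s|}
  have hS : IsClosed S :=
    (hf.mono Icc_subset_Ici_self).preimage_isClosed_of_isClosed isClosed_Icc
      (isClosed_le continuous_const continuous_abs)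
  have hSbdd : BddBelow S := ⟨a, fun s hs => hs.1.1⟩
  obtain ⟨⟨haT, hTt⟩, hT⟩ : sInf S ∈ S :=
    hS.csInf_mem ⟨t, ⟨ht, le_rfl⟩, hbad⟩ hSbdd
  have hbelow : ∀ s ∈ Ico a (sInf S), |f s| < M := fun s hs =>
    not_le.1 fun h => (csInf_le hSbdd ⟨⟨hs.1, hs.2.le.trans hTt⟩, h⟩).not_gt hs.2
  have hupto : ∀ s ∈ Icc a (sInf S), |f s| ≤ M := by
    intro s hs
    rcases hs.2.lt_or_eq with hlt | heq
    · exact (hbelow s ⟨hs.1, hlt⟩).le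
    rcases haT.eq_or_lt with hTa | haT'
    · rwa [heq, ← hTa]
    have hcl : f (sInf S) ∈ closure (f '' Ico a (sInf S)) :=
      ((hf (sInf S) haT).mono Ico_subset_Ici_self).mem_closure_image
        (by rw [closure_Ico haT'.ne]; exact ⟨haT, le_rfl⟩)
    have hsub : f '' Ico a (sInf S) ⊆ {y | |y| ≤ M} := by
      rintro _ ⟨s, hs, rfl⟩; exact (hbelow s hs).le
    rw [heq]
    exact closure_minimal hsub (isClosed_le continuous_abs continuous_const) hcl
  exact (hstep _ haT hupto).not_ge hT

lemma hasDerivAt_deriv_of_contDiffOn_Ici {w : ℝ → ℝ} {a s : ℝ}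
    (hw : ContDiffOn ℝ 2 w (Ici a)) (hs : a < s) :
    HasDerivAt w (deriv w s) s ∧ HasDerivAt (deriv w) (deriv (deriv w) s) s := by
  have hw' : ContDiffOn ℝ 2 w (Ioi a) := hw.mono Ioi_subset_Ici_self
  have hw'' : ContDiffOn ℝ 1 (deriv w) (Ioi a) := hw'.deriv_of_isOpen isOpen_Ioi (by norm_num)
  exact ⟨(hw'.differentiableOn two_ne_zero s hs |>.differentiableAt (Ioi_mem_nhds hs)).hasDerivAt,
    (hw''.differentiableOn one_ne_zero s hs |>.differentiableAt (Ioi_mem_nhds hs)).hasDerivAt⟩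

/-- `E` at time `s` for `w s = x`, `w' s = d`; leaving `d` free lets the endpoint `s₀`, where
`deriv w` is junk, use `derivWithin w (Ici s₀)` instead. -/
noncomputable def energy (μ x d s : ℝ) : ℝ :=
  d ^ 2 / 2 + (1/32 + 1/(8*s^2) - μ/(4*s)) * x ^ 2 - x ^ 4 / (8*s^2)

noncomputable def energyRate (μ x s : ℝ) : ℝ :=
  (μ / (4 * s ^ 2) - 1 / (4 * s ^ 3)) * x ^ 2 + x ^ 4 / (4 * s ^ 3)

section Energy

variable {μ s : ℝ}

lemma sq_div_add_sq_div_le_energy (x d : ℝ) (hs : 16 * (|μ| + 1) ≤ s) (hx : |x| ≤ 1) :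
    d ^ 2 / 2 + x ^ 2 / 64 ≤ energy μ x d s := by
  have hs0 : 0 < s := by linarith [abs_nonneg μ]
  have hx2 : x ^ 2 ≤ 1 := (sq_le_one_iff_abs_le_one x).2 hx
  have hμ : μ / (4 * s) ≤ 1 / 64 := by
    rw [div_le_iff₀ (by positivity)]; linarith [le_abs_self μ]
  have hquartic : x ^ 4 / (8 * s ^ 2) ≤ x ^ 2 / (8 * s ^ 2) :=
    div_le_div_of_nonneg_right (by nlinarith [sq_nonneg x]) (by positivity)
  have : μ / (4 * s) * x ^ 2 ≤ 1 / 64 * x ^ 2 := by gcongr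
  have hexpand : energy μ x d s
      = d ^ 2 / 2 + x ^ 2 / 32 + x ^ 2 / (8 * s ^ 2) - μ / (4 * s) * x ^ 2
        - x ^ 4 / (8 * s ^ 2) := by unfold energy; ring
  linarith

lemma energy_nonneg (x d : ℝ) (hs : 16 * (|μ| + 1) ≤ s) (hx : |x| ≤ 1) :
    0 ≤ energy μ x d s := by
  linarith [sq_div_add_sq_div_le_energy x d hs hx, sq_nonneg d, sq_nonneg x]

lemma energyRate_le_mul_energy (x d : ℝ) (hs : 16 * (|μ| + 1) ≤ s) (hx : |x| ≤ 1) :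
    energyRate μ x s ≤ 16 * (|μ| + 1) / s ^ 2 * energy μ x d s := by
  have hs0 : 0 < s := by linarith [abs_nonneg μ]
  have hx2 : x ^ 2 ≤ 1 := (sq_le_one_iff_abs_le_one x).2 hx
  have hquartic : x ^ 4 / (4 * s ^ 3) ≤ x ^ 2 / (4 * s ^ 3) :=
    div_le_div_of_nonneg_right (by nlinarith [sq_nonneg x]) (by positivity)
  have hμ : μ / (4 * s ^ 2) * x ^ 2 ≤ |μ| / (4 * s ^ 2) * x ^ 2 := by
    gcongr; exact le_abs_self μ
  have hlow : 16 * (|μ| + 1) / s ^ 2 * (x ^ 2 / 64)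
      ≤ 16 * (|μ| + 1) / s ^ 2 * energy μ x d s := by
    gcongr; linarith [sq_div_add_sq_div_le_energy x d hs hx, sq_nonneg d]
  have hsplit : 16 * (|μ| + 1) / s ^ 2 * (x ^ 2 / 64)
      = |μ| / (4 * s ^ 2) * x ^ 2 + x ^ 2 / (4 * s ^ 2) := by field_simp; ring
  have : energyRate μ x s
      = μ / (4 * s ^ 2) * x ^ 2 - x ^ 2 / (4 * s ^ 3) + x ^ 4 / (4 * s ^ 3) := by
    unfold energyRate; ring
  linarith [div_nonneg (sq_nonneg x) (by positivity : (0:ℝ) ≤ 4 * s ^ 2)]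

lemma hasDerivAt_energy {x d : ℝ → ℝ} {d' : ℝ} (hs : s ≠ 0) (hx : HasDerivAt x (d s) s)
    (hd : HasDerivAt d d' s)
    (hode : d' + (1/16 + 1/(4*s^2) - μ/(2*s)) * x s - x s ^ 3 / (2*s^2) = 0) :
    HasDerivAt (fun t => energy μ (x t) (d t) t) (energyRate μ (x s) s) s := by
  have hsq : HasDerivAt (fun t : ℝ => 8 * t ^ 2) (16 * s) s :=
    ((hasDerivAt_pow 2 s).const_mul (8:ℝ)).congr_deriv (by norm_num; ring)
  have hlin : HasDerivAt (fun t : ℝ => 4 * t) 4 s := by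
    simpa using (hasDerivAt_id s).const_mul (4:ℝ)
  have h8 : 8 * s ^ 2 ≠ 0 := by positivity
  have h4 : 4 * s ≠ 0 := by positivity
  have := ((hd.pow 2).div_const 2).add
    ((((hasDerivAt_const s (1/32 : ℝ)).add ((hasDerivAt_const s 1).div hsq h8)).sub
      ((hasDerivAt_const s μ).div hlin h4)).mul (hx.pow 2)) |>.sub ((hx.pow 4).div hsq h8)
  refine this.congr_deriv ?_
  simp only [energyRate, Pi.add_apply, Pi.sub_apply, Pi.div_apply, Pi.pow_apply]
  rw [show d' = x s ^ 3 / (2*s^2) - (1/16 + 1/(4*s^2) - μ/(2*s)) * x s by linarith]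
  field_simp
  ring

lemma energy_le_sq_div_add_sq_div (x d : ℝ) (hs : 16 * (|μ| + 1) ≤ s) :
    energy μ x d s ≤ d ^ 2 / 2 + x ^ 2 / 16 := by
  have hs16 : 16 ≤ s := by linarith [abs_nonneg μ]
  have hcoef : 1/32 + 1/(8*s^2) - μ/(4*s) ≤ 1/16 := by
    have h1 : 1 / (8 * s ^ 2) ≤ 1 / 2048 := by
      rw [div_le_div_iff₀ (by positivity) (by norm_num)]; nlinarith
    have h2 : -(μ / (4 * s)) ≤ 1 / 64 := by
      rw [← neg_div, div_le_div_iff₀ (by positivity) (by norm_num)]; linarith [neg_abs_le μ]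
    linarith
  have : (1/32 + 1/(8*s^2) - μ/(4*s)) * x ^ 2 ≤ 1 / 16 * x ^ 2 := by gcongr
  unfold energy
  linarith [show 0 ≤ x ^ 4 / (8 * s ^ 2) by positivity]

end Energy

section Solution

variable {μ : ℝ} {w : ℝ → ℝ}

lemma continuousOn_energy (hw : ContDiffOn ℝ 2 w (Ici (16 * (|μ| + 1)))) :
    ContinuousOn (fun s => energy μ (w s) (derivWithin w (Ici (16 * (|μ| + 1))) s) s)
      (Ici (16 * (|μ| + 1))) := by
  have hpos : ∀ s ∈ Ici (16 * (|μ| + 1)), s ≠ 0 := fun s hs =>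
    (lt_of_lt_of_le (by positivity) hs).ne'
  have hw0 := hw.continuousOn
  have hw1 := hw.continuousOn_derivWithin (uniqueDiffOn_Ici _) (by norm_num)
  unfold energy
  fun_prop (disch := intro s hs; have := hpos s hs; positivity)

lemma energy_le_exp_one_mul (hw : ContDiffOn ℝ 2 w (Ici (16 * (|μ| + 1))))
    (hode : ∀ s > 16 * (|μ| + 1),
      deriv (deriv w) s + (1/16 + 1/(4*s^2) - μ/(2*s)) * w s - (w s) ^ 3 / (2*s^2) = 0)
    {s₁ : ℝ} (hs₁ : 16 * (|μ| + 1) ≤ s₁)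
    (hbd : ∀ s ∈ Icc (16 * (|μ| + 1)) s₁, |w s| ≤ 1) :
    energy μ (w s₁) (derivWithin w (Ici (16 * (|μ| + 1))) s₁) s₁
      ≤ exp 1 * energy μ (w (16 * (|μ| + 1))) (derivWithin w (Ici (16 * (|μ| + 1)))
        (16 * (|μ| + 1))) (16 * (|μ| + 1)) := by
  set a := 16 * (|μ| + 1)
  set E := fun s => energy μ (w s) (derivWithin w (Ici a) s) s
  have ha : 0 < a := by positivity
  have hE' : ∀ s ∈ Ioo a s₁, HasDerivAt E (energyRate μ (w s) s) s := by
    intro s hs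
    obtain ⟨hw1, hw2⟩ := hasDerivAt_deriv_of_contDiffOn_Ici hw hs.1
    refine (hasDerivAt_energy (ha.trans hs.1).ne' hw1 hw2 (hode s hs.1)).congr_of_eventuallyEq ?_
    filter_upwards [Ioi_mem_nhds hs.1] with t (ht : a < t)
    simp only [E, derivWithin_of_mem_nhds (Ici_mem_nhds ht)]
  have hmono := mul_exp_div_le_of_hasDerivAt_le ha hs₁
    ((continuousOn_energy hw).mono Icc_subset_Ici_self) hE'
    (fun s hs => energyRate_le_mul_energy _ _ hs.1.le (hbd s (Ioo_subset_Icc_self hs)))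
  rw [div_self ha.ne'] at hmono
  have hE₁ : 0 ≤ E s₁ := energy_nonneg _ _ hs₁ (hbd s₁ ⟨hs₁, le_rfl⟩)
  calc E s₁ ≤ E s₁ * exp (a / s₁) :=
        le_mul_of_one_le_right hE₁ (one_le_exp (div_nonneg ha.le (ha.le.trans hs₁)))
    _ ≤ E a * exp 1 := hmono
    _ = exp 1 * E a := mul_comm _ _

lemma abs_lt_one_and_abs_derivWithin_le_one (hw : ContDiffOn ℝ 2 w (Ici (16 * (|μ| + 1))))
    (hode : ∀ s > 16 * (|μ| + 1),
      deriv (deriv w) s + (1/16 + 1/(4*s^2) - μ/(2*s)) * w s - (w s) ^ 3 / (2*s^2) = 0)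
    (h₀ : |w (16 * (|μ| + 1))| ≤ 1/32)
    (h₀' : |derivWithin w (Ici (16 * (|μ| + 1))) (16 * (|μ| + 1))| ≤ 1/32)
    (s₁ : ℝ) (hs₁ : 16 * (|μ| + 1) ≤ s₁)
    (hbd : ∀ s ∈ Icc (16 * (|μ| + 1)) s₁, |w s| ≤ 1) :
    |w s₁| < 1 ∧ |derivWithin w (Ici (16 * (|μ| + 1))) s₁| ≤ 1 := by
  set a := 16 * (|μ| + 1)
  set d := derivWithin w (Ici a)
  have hsq : ∀ y : ℝ, |y| ≤ 1/32 → y ^ 2 ≤ 1/1024 := fun y hy => by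
    nlinarith [sq_abs y, abs_nonneg y]
  have hE₀ : energy μ (w a) (d a) a ≤ 1/1024 := by
    linarith [energy_le_sq_div_add_sq_div (μ := μ) (w a) (d a) le_rfl, hsq _ h₀, hsq _ h₀']
  have hE₀' : 0 ≤ energy μ (w a) (d a) a :=
    energy_nonneg (μ := μ) _ _ le_rfl (h₀.trans (by norm_num))
  have hE₁ : energy μ (w s₁) (d s₁) s₁ ≤ 3/1024 := calc
    _ ≤ exp 1 * energy μ (w a) (d a) a := energy_le_exp_one_mul hw hode hs₁ hbd
    _ ≤ 3 * (1/1024) :=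
      mul_le_mul (exp_one_lt_d9.trans (by norm_num)).le hE₀ hE₀' (by norm_num)
    _ = 3/1024 := by norm_num
  have hlow :=
    sq_div_add_sq_div_le_energy (μ := μ) (w s₁) (d s₁) hs₁ (hbd s₁ ⟨hs₁, le_rfl⟩)
  exact ⟨(sq_lt_one_iff_abs_lt_one _).1 (by nlinarith [sq_nonneg (d s₁)]),
    (sq_le_one_iff_abs_le_one _).1 (by nlinarith [sq_nonneg (w s₁)])⟩

end Solution

/-- Self-similar defocusing ODE `w'' + (1/16 + 1/(4s²) - μ/(2s))w - w³/(2s²) = 0` on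
`[s₀,∞)`, `s₀ = 16(|μ|+1)`, with `E = ½(w')² + (1/32 + 1/(8s²) - μ/(4s))w² - w⁴/(8s²)`:
as long as `|w| ≤ 1` one has `E ≥ ½(w')² + w²/64` and `E' ≤ (16(|μ|+1)/s²)E`, and if the
data `|w(s₀)| ≤ 1`, `|w'(s₀)|` are sufficiently small then `|w(s)| ≤ 1` for all `s ≥ s₀`
and `w`, `w'` remain bounded. -/
theorem stmt15 (μ : ℝ) :
    let s₀ : ℝ := 16 * (|μ| + 1)
    let E : (ℝ → ℝ) → ℝ → ℝ := fun w s =>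
      (deriv w s) ^ 2 / 2 + (1/32 + 1/(8*s^2) - μ/(4*s)) * (w s) ^ 2 - (w s) ^ 4 / (8*s^2)
    (∀ w : ℝ → ℝ, ContDiffOn ℝ 2 w (Set.Ici s₀) →
      (∀ s > s₀,
        deriv (deriv w) s + (1/16 + 1/(4*s^2) - μ/(2*s)) * w s - (w s) ^ 3 / (2*s^2) = 0) →
      ∀ s > s₀, (∀ s' ∈ Set.Icc s₀ s, |w s'| ≤ 1) →
        (deriv w s) ^ 2 / 2 + (w s) ^ 2 / 64 ≤ E w s ∧
        deriv (E w) s ≤ (16 * (|μ| + 1) / s ^ 2) * E w s) ∧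
    ∃ δ > (0:ℝ), ∀ w : ℝ → ℝ, ContDiffOn ℝ 2 w (Set.Ici s₀) →
      (∀ s > s₀,
        deriv (deriv w) s + (1/16 + 1/(4*s^2) - μ/(2*s)) * w s - (w s) ^ 3 / (2*s^2) = 0) →
      |w s₀| ≤ δ → |derivWithin w (Set.Ici s₀) s₀| ≤ δ →
      (∀ s ≥ s₀, |w s| ≤ 1) ∧
      ∃ C : ℝ, ∀ s ≥ s₀, |w s| ≤ C ∧ |derivWithin w (Set.Ici s₀) s| ≤ C := by
  intro s₀ E
  refine ⟨fun w hw hode s hs hbd => ?_, 1/32, by norm_num, fun w hw hode h₀ h₀' => ?_⟩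
  · have hws := hbd s ⟨hs.le, le_rfl⟩
    obtain ⟨hw1, hw2⟩ := hasDerivAt_deriv_of_contDiffOn_Ici hw hs
    have hE := hasDerivAt_energy (μ := μ)
      ((lt_of_le_of_lt (by positivity : (0:ℝ) ≤ 16 * (|μ| + 1)) hs).ne') hw1 hw2 (hode s hs)
    refine ⟨sq_div_add_sq_div_le_energy _ _ hs.le hws, ?_⟩
    rw [show deriv (E w) s = _ from hE.deriv]
    exact energyRate_le_mul_energy _ _ hs.le hws
  · have hsmall := abs_lt_one_and_abs_derivWithin_le_one hw hode h₀ h₀'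
    have hbd : ∀ s ≥ s₀, |w s| < 1 :=
      abs_lt_of_bootstrap hw.continuousOn (h₀.trans (by norm_num))
        (fun t ht hbd => (hsmall t ht hbd).1)
    have hbd' : ∀ s ≥ s₀, ∀ s' ∈ Icc s₀ s, |w s'| ≤ 1 := fun s _ s' hs' =>
      (hbd s' hs'.1).le
    exact ⟨fun s hs => (hbd s hs).le, 1,
      fun s hs => ⟨(hbd s hs).le, (hsmall s hs (hbd' s hs)).2⟩⟩
end
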